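/- arXiv:1404.4150 — 2 statements merged into one kernel-verified Lean document; each statement's English description precedes it below -/
import Mathlib

section
/- Suppose U(x,m,t) = ½x*P(t)x + x*Σ(t,m₁)y + ½y*Γ(t,m₁)y + μ(t,m₁) solves the LQ mean field games master equation. Then matching coefficients of the quadratic forms in x and y forces: (i) dP/dt + PA + A*P − PBR⁻¹B*P + Q + Q̄ = 0, P(T) = Q_T + Q̄_T; (ii) dΣ/dt + Σ(A + Ām₁ − BR⁻¹B*P) + (A* − PBR⁻¹B*)Σ − ΣBR⁻¹B*Σm₁ − Q̄S + PĀ = 0, Σ(T,m₁) = −Q̄_T S_T. In particular, unlike the mean field type control case, Σ(t,m₁) need not be symmetric. -/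
/-!
Both sides of the master equation are polynomials of degree two in `(x, y)`. Subtracting the
identity at `(0, y)` from the one at `(x, y)` leaves `½ xᵀ L x + xᵀ M y = 0` for all `x, y`, where
`L` is `P'` minus the right-hand side of the Riccati equation and `M` is `Σ'` minus that of the
`Σ`-equation. Putting `y = 0` and polarizing (`L` is symmetric) gives `L = 0`, and then `M = 0`.
Nothing forces `M`, hence `Σ`, to be symmetric: `x` and `y` enter the bilinear term differently.
The terminal identity is treated the same way.
-/

open Matrix

namespace Matrix

lemma eq_zero_of_forall_dotProduct_mulVec {m n R : Type*} [Fintype m] [Fintype n]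
    [CommSemiring R] {M : Matrix m n R} (h : ∀ x y, x ⬝ᵥ M *ᵥ y = 0) : M = 0 :=
  mulVec_injective <| funext fun y => by
    simpa using dotProduct_eq_zero _ fun x => (dotProduct_comm _ _).trans (h x y)

lemma mulVec_dotProduct_eq_dotProduct_transpose_mulVec {m n R : Type*} [Fintype m] [Fintype n]
    [CommSemiring R] (M : Matrix m n R) (x : n → R) (w : m → R) :
    M *ᵥ x ⬝ᵥ w = x ⬝ᵥ Mᵀ *ᵥ w := by
  rw [dotProduct_transpose_mulVec, dotProduct_comm]

variable {n 𝕜 : Type*} [Fintype n] [Field 𝕜] [CharZero 𝕜]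

lemma IsSymm.eq_zero_of_forall_dotProduct_mulVec_self {M : Matrix n n 𝕜} (hM : M.IsSymm)
    (h : ∀ x, x ⬝ᵥ M *ᵥ x = 0) : M = 0 :=
  eq_zero_of_forall_dotProduct_mulVec fun x y => by
    have hpolar := h (x + y)
    rw [mulVec_add, dotProduct_add, add_dotProduct, add_dotProduct, h x, h y,
      ← dotProduct_transpose_mulVec, hM.eq] at hpolar
    linear_combination hpolar / 2

lemma IsSymm.eq_zero_and_eq_zero_of_quadratic_add_bilinear {L M : Matrix n n 𝕜} (hL : L.IsSymm)
    (h : ∀ x y, (1 / 2) * (x ⬝ᵥ L *ᵥ x) + x ⬝ᵥ M *ᵥ y = 0) : L = 0 ∧ M = 0 := by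
  have hL0 : L = 0 := hL.eq_zero_of_forall_dotProduct_mulVec_self fun x => by simpa using h x 0
  exact ⟨hL0, eq_zero_of_forall_dotProduct_mulVec fun x y => by simpa [hL0] using h x y⟩

end Matrix

section LQ

variable {ι 𝕜 : Type*} [Fintype ι] [Field 𝕜] [CharZero 𝕜]
  {A Ab S Q Qb QT QbT ST K P P' Sig Sig' Gam Gam' : Matrix ι ι 𝕜}

theorem riccati_and_sigma_eq_of_master_identity (hK : K.IsSymm) (hP : P.IsSymm)
    (hP' : P'.IsSymm) (hQ : Q.IsSymm) (hQb : Qb.IsSymm) (m₁ c₀ c₁ c₂ c₃ : 𝕜)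
    (h : ∀ x y : ι → 𝕜,
      -((1 / 2) * (x ⬝ᵥ P' *ᵥ x) + x ⬝ᵥ Sig' *ᵥ y + (1 / 2) * (y ⬝ᵥ Gam' *ᵥ y) + c₀) - c₁
        - ((Sigᵀ *ᵥ x + Gam *ᵥ y) ⬝ᵥ
            (A *ᵥ y + m₁ • (Ab *ᵥ y) - K *ᵥ (P *ᵥ y + m₁ • (Sig *ᵥ y)))) - c₂ - c₃
      = (1 / 2) * (x ⬝ᵥ (Q + Qb) *ᵥ x) - x ⬝ᵥ (Qb * S) *ᵥ y
        + (1 / 2) * (y ⬝ᵥ (Sᵀ * Qb * S) *ᵥ y)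
        - (1 / 2) * ((P *ᵥ x + Sig *ᵥ y) ⬝ᵥ K *ᵥ (P *ᵥ x + Sig *ᵥ y))
        + (P *ᵥ x + Sig *ᵥ y) ⬝ᵥ (A *ᵥ x + Ab *ᵥ y)) :
    P' = -(P * A + Aᵀ * P - P * K * P + Q + Qb) ∧
    Sig' = -(Sig * (A + m₁ • Ab - K * P) + (Aᵀ - P * K) * Sig - m₁ • (Sig * K * Sig)
      - Qb * S + P * Ab) := by
  rw [← sub_eq_zero, ← sub_eq_zero (a := Sig')]
  refine (hP'.sub ?_).eq_zero_and_eq_zero_of_quadratic_add_bilinear fun x y => ?_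
  · simp only [IsSymm, transpose_neg, transpose_add, transpose_sub, transpose_mul,
      transpose_transpose, hP.eq, hK.eq, hQ.eq, hQb.eq, Matrix.mul_assoc]
    abel
  · have h₁ := h x y
    have h₀ := h 0 y
    have hflip : ∀ M : Matrix ι ι 𝕜, y ⬝ᵥ M *ᵥ x = x ⬝ᵥ Mᵀ *ᵥ y := fun M =>
      (dotProduct_transpose_mulVec M x y).symm
    have hPA : x ⬝ᵥ (Aᵀ * P) *ᵥ x = x ⬝ᵥ (P * A) *ᵥ x := by
      simpa only [transpose_mul, hP.eq] using dotProduct_transpose_mulVec (P * A) x x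
    simp only [mulVec_zero, dotProduct_zero, zero_dotProduct, add_zero, zero_add, sub_zero,
      mulVec_add, add_mulVec, mulVec_smul, dotProduct_add, add_dotProduct, dotProduct_sub,
      dotProduct_smul, smul_eq_mul, mulVec_dotProduct_eq_dotProduct_transpose_mulVec,
      mulVec_mulVec, hflip, transpose_mul, transpose_transpose, hP.eq, hK.eq,
      Matrix.mul_assoc] at h₁ h₀
    simp only [sub_mulVec, neg_mulVec, add_mulVec, smul_mulVec, Matrix.mul_add, Matrix.mul_sub,
      Matrix.sub_mul, Matrix.mul_smul, dotProduct_add, dotProduct_sub, dotProduct_neg,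
      dotProduct_smul, smul_eq_mul, Matrix.mul_assoc]
    rw [hPA]
    linear_combination h₀ - h₁

theorem terminal_eq_of_ansatz_eq (hP : P.IsSymm) (hQT : QT.IsSymm) (hQbT : QbT.IsSymm) (c : 𝕜)
    (h : ∀ x y : ι → 𝕜,
      (1 / 2) * (x ⬝ᵥ P *ᵥ x) + x ⬝ᵥ Sig *ᵥ y + (1 / 2) * (y ⬝ᵥ Gam *ᵥ y) + c
        = (1 / 2) * (x ⬝ᵥ (QT + QbT) *ᵥ x) - x ⬝ᵥ (QbT * ST) *ᵥ y
          + (1 / 2) * (y ⬝ᵥ (STᵀ * QbT * ST) *ᵥ y)) :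
    P = QT + QbT ∧ Sig = -(QbT * ST) := by
  rw [← sub_eq_zero, ← sub_eq_zero (a := Sig)]
  refine (hP.sub (hQT.add hQbT)).eq_zero_and_eq_zero_of_quadratic_add_bilinear fun x y => ?_
  have h₁ := h x y
  have h₀ := h 0 y
  simp only [mulVec_zero, dotProduct_zero, zero_dotProduct, mul_zero, add_zero, zero_add,
    sub_zero] at h₀
  simp only [sub_mulVec, neg_mulVec, dotProduct_sub, dotProduct_neg]
  linear_combination h₁ - h₀

end LQ

theorem mfg_master_coefficient_matching_general (n dd : ℕ)
    (A Ab S ST Q Qb QT QbT a : Matrix (Fin n) (Fin n) ℝ)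
    (B : Matrix (Fin n) (Fin dd) ℝ) (R : Matrix (Fin dd) (Fin dd) ℝ) (β T : ℝ)
    (hR : R.PosDef) (hQ : Qᵀ = Q) (hQb : Qbᵀ = Qb) (hQT : QTᵀ = QT) (hQbT : QbTᵀ = QbT)
    (P P' : ℝ → Matrix (Fin n) (Fin n) ℝ)
    (Sig Sig' Gam Gam' : ℝ → ℝ → Matrix (Fin n) (Fin n) ℝ)
    (mu mu' : ℝ → ℝ → ℝ)
    (hPsymm : ∀ t, (P t)ᵀ = P t) (hP'symm : ∀ t, (P' t)ᵀ = P' t)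
    -- the master equation identity after substituting the ansatz
    (hmaster : ∀ t m1 (x y : Fin n → ℝ),
      -((1/2) * (x ⬝ᵥ (P' t).mulVec x) + x ⬝ᵥ (Sig' t m1).mulVec y
          + (1/2) * (y ⬝ᵥ (Gam' t m1).mulVec y) + mu' t m1)
        - ((1/2) * (a * P t).trace + (β^2/2) * (P t).trace)
        - (((Sig t m1)ᵀ.mulVec x + (Gam t m1).mulVec y) ⬝ᵥ
            (A.mulVec y + m1 • (Ab.mulVec y)
              - (B * R⁻¹ * Bᵀ).mulVec ((P t).mulVec y + m1 • ((Sig t m1).mulVec y))))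
        - (β^2/2) * (Gam t m1).trace * m1^2 - β^2 * (Sig t m1).trace * m1
      = (1/2) * (x ⬝ᵥ (Q + Qb).mulVec x) - x ⬝ᵥ (Qb * S).mulVec y
        + (1/2) * (y ⬝ᵥ (Sᵀ * Qb * S).mulVec y)
        - (1/2) * (((P t).mulVec x + (Sig t m1).mulVec y) ⬝ᵥ
            (B * R⁻¹ * Bᵀ).mulVec ((P t).mulVec x + (Sig t m1).mulVec y))
        + ((P t).mulVec x + (Sig t m1).mulVec y) ⬝ᵥ (A.mulVec x + Ab.mulVec y))
    -- the terminal condition identity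
    (hterm : ∀ m1 (x y : Fin n → ℝ),
      (1/2) * (x ⬝ᵥ (P T).mulVec x) + x ⬝ᵥ (Sig T m1).mulVec y
          + (1/2) * (y ⬝ᵥ (Gam T m1).mulVec y) + mu T m1
        = (1/2) * (x ⬝ᵥ (QT + QbT).mulVec x) - x ⬝ᵥ (QbT * ST).mulVec y
          + (1/2) * (y ⬝ᵥ (STᵀ * QbT * ST).mulVec y)) :
    (∀ t, P' t = -(P t * A + Aᵀ * P t - P t * B * R⁻¹ * Bᵀ * P t + Q + Qb)) ∧
    P T = QT + QbT ∧
    (∀ t m1, Sig' t m1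
      = -(Sig t m1 * (A + m1 • Ab - B * R⁻¹ * Bᵀ * P t)
          + (Aᵀ - P t * B * R⁻¹ * Bᵀ) * Sig t m1
          - m1 • (Sig t m1 * B * R⁻¹ * Bᵀ * Sig t m1)
          - Qb * S + P t * Ab)) ∧
    (∀ m1, Sig T m1 = -(QbT * ST)) := by
  have hK : (B * R⁻¹ * Bᵀ).IsSymm := by
    simpa only [isHermitian_iff_isSymm, conjTranspose_eq_transpose_of_trivial]
      using isHermitian_mul_mul_conjTranspose B hR.isHermitian.inv
  have hmatch := fun t m1 ↦ riccati_and_sigma_eq_of_master_identity hK (hPsymm t) (hP'symm t)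
    hQ hQb m1 _ _ _ _ (hmaster t m1)
  have hterminal := fun m1 ↦ terminal_eq_of_ansatz_eq (hPsymm T) hQT hQbT _ (hterm m1)
  refine ⟨fun t ↦ ?_, (hterminal 0).1, fun t m1 ↦ ?_, fun m1 ↦ (hterminal m1).2⟩
  · simpa only [Matrix.mul_assoc] using (hmatch t 0).1
  · simpa only [Matrix.mul_assoc] using (hmatch t m1).2

/-- In the LQ mean field games master equation, substituting the ansatz
`U(x,m,t) = ½x*P(t)x + x*Σ(t,m₁)y + ½y*Γ(t,m₁)y + μ(t,m₁)` and matching coefficients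
of the quadratic forms in `x` and `y` forces
(i) the `P`-Riccati equation with `P(T) = Q_T + Q̄_T`, and
(ii) the (nonsymmetric) `Σ`-equation with `Σ(T,m₁) = -Q̄_T S_T`. -/
theorem mfg_master_coefficient_matching (n dd : ℕ)
    (A Ab S ST Q Qb QT QbT a : Matrix (Fin n) (Fin n) ℝ)
    (B : Matrix (Fin n) (Fin dd) ℝ) (R : Matrix (Fin dd) (Fin dd) ℝ) (β T : ℝ)
    (hR : R.PosDef) (hQ : Qᵀ = Q) (hQb : Qbᵀ = Qb) (hQT : QTᵀ = QT) (hQbT : QbTᵀ = QbT)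
    (P P' : ℝ → Matrix (Fin n) (Fin n) ℝ)
    (Sig Sig' Gam Gam' : ℝ → ℝ → Matrix (Fin n) (Fin n) ℝ)
    (mu mu' : ℝ → ℝ → ℝ)
    (hPsymm : ∀ t, (P t)ᵀ = P t) (hP'symm : ∀ t, (P' t)ᵀ = P' t)
    (hGamSymm : ∀ t m1, (Gam t m1)ᵀ = Gam t m1)
    -- P', Σ', Γ', μ' are the time derivatives of P, Σ, Γ, μ
    (hdP : ∀ t (i j : Fin n), HasDerivAt (fun s => P s i j) (P' t i j) t)
    (hdSig : ∀ t m1 (i j : Fin n), HasDerivAt (fun s => Sig s m1 i j) (Sig' t m1 i j) t)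
    (hdGam : ∀ t m1 (i j : Fin n), HasDerivAt (fun s => Gam s m1 i j) (Gam' t m1 i j) t)
    (hdmu : ∀ t m1, HasDerivAt (fun s => mu s m1) (mu' t m1) t)
    -- the master equation identity after substituting the ansatz
    (hmaster : ∀ t m1 (x y : Fin n → ℝ),
      -((1/2) * (x ⬝ᵥ (P' t).mulVec x) + x ⬝ᵥ (Sig' t m1).mulVec y
          + (1/2) * (y ⬝ᵥ (Gam' t m1).mulVec y) + mu' t m1)
        - ((1/2) * (a * P t).trace + (β^2/2) * (P t).trace)
        - (((Sig t m1)ᵀ.mulVec x + (Gam t m1).mulVec y) ⬝ᵥ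
            (A.mulVec y + m1 • (Ab.mulVec y)
              - (B * R⁻¹ * Bᵀ).mulVec ((P t).mulVec y + m1 • ((Sig t m1).mulVec y))))
        - (β^2/2) * (Gam t m1).trace * m1^2 - β^2 * (Sig t m1).trace * m1
      = (1/2) * (x ⬝ᵥ (Q + Qb).mulVec x) - x ⬝ᵥ (Qb * S).mulVec y
        + (1/2) * (y ⬝ᵥ (Sᵀ * Qb * S).mulVec y)
        - (1/2) * (((P t).mulVec x + (Sig t m1).mulVec y) ⬝ᵥ
            (B * R⁻¹ * Bᵀ).mulVec ((P t).mulVec x + (Sig t m1).mulVec y))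
        + ((P t).mulVec x + (Sig t m1).mulVec y) ⬝ᵥ (A.mulVec x + Ab.mulVec y))
    -- the terminal condition identity
    (hterm : ∀ m1 (x y : Fin n → ℝ),
      (1/2) * (x ⬝ᵥ (P T).mulVec x) + x ⬝ᵥ (Sig T m1).mulVec y
          + (1/2) * (y ⬝ᵥ (Gam T m1).mulVec y) + mu T m1
        = (1/2) * (x ⬝ᵥ (QT + QbT).mulVec x) - x ⬝ᵥ (QbT * ST).mulVec y
          + (1/2) * (y ⬝ᵥ (STᵀ * QbT * ST).mulVec y)) :
    (∀ t, P' t = -(P t * A + Aᵀ * P t - P t * B * R⁻¹ * Bᵀ * P t + Q + Qb)) ∧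
    P T = QT + QbT ∧
    (∀ t m1, Sig' t m1
      = -(Sig t m1 * (A + m1 • Ab - B * R⁻¹ * Bᵀ * P t)
          + (Aᵀ - P t * B * R⁻¹ * Bᵀ) * Sig t m1
          - m1 • (Sig t m1 * B * R⁻¹ * Bᵀ * Sig t m1)
          - Qb * S + P t * Ab)) ∧
    (∀ m1, Sig T m1 = -(QbT * ST)) :=
  mfg_master_coefficient_matching_general n dd A Ab S ST Q Qb QT QbT a B R β T hR hQ hQb hQT hQbT P
    P' Sig Sig' Gam Gam' mu mu' hPsymm hP'symm hmaster hterm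
end

section
/- Consider the ODE system on [0,T]: dy/dt = (A + Ā − BR⁻¹B*P(t))y − BR⁻¹B*Σ(t)y with y(0) = x̄₀, where Σ(t) solves the Σ-Riccati equation at m₁ = 1. Then r(t) := Σ(t)y(t) satisfies −dr/dt = (A* + Ā* − PBR⁻¹B*)r + (S*Q̄S − Q̄S − S*Q̄ + PĀ + Ā*P)y with r(T) = (S_T*Q̄_T S_T − S_T*Q̄_T − Q̄_T S_T)y(T). -/
/-!
Product rule for `r = Σy`: with `M = A + Ā - BR⁻¹B*P` and `K = BR⁻¹B*`, the terms `ΣM` and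
`-ΣKΣ` of `-Σ'` cancel against `Σy' = ΣMy - ΣKΣy`, leaving `-(MᵀΣy + Cy)` with `C` the
source term of the `Σ`-equation; and `Mᵀ = A* + Ā* - PBR⁻¹B*` because `P` and `R` are
symmetric.
-/

open Matrix

theorem hasDerivAt_mulVec_apply {m n : Type*} [Fintype n] {M : ℝ → Matrix m n ℝ}
    {M' : Matrix m n ℝ} {v : ℝ → n → ℝ} {v' : n → ℝ} {t : ℝ}
    (hM : ∀ i j, HasDerivAt (fun s => M s i j) (M' i j) t)
    (hv : ∀ j, HasDerivAt (fun s => v s j) (v' j) t) (i : m) :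
    HasDerivAt (fun s => (M s *ᵥ v s) i) ((M' *ᵥ v t + M t *ᵥ v') i) t := by
  simpa [mulVec, dotProduct, Finset.sum_add_distrib] using
    HasDerivAt.fun_sum fun j (_ : j ∈ Finset.univ) => (hM i j).mul (hv j)

theorem riccati_mulVec_add_mulVec_feedback {n R : Type*} [Fintype n] [CommRing R]
    (Sig M N K C : Matrix n n R) (y : n → R) :
    -(Sig * M + N * Sig - Sig * K * Sig + C) *ᵥ y + Sig *ᵥ (M *ᵥ y - (K * Sig) *ᵥ y)
      = -(N *ᵥ (Sig *ᵥ y) + C *ᵥ y) := by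
  simp only [neg_mulVec, add_mulVec, sub_mulVec, mulVec_sub, mulVec_mulVec, Matrix.mul_assoc]
  abel

theorem transpose_closedLoop_eq {n d 𝕜 : Type*} [Fintype n] [Fintype d] [DecidableEq d] [CommRing 𝕜]
    (A Ab P : Matrix n n 𝕜) (B : Matrix n d 𝕜) (R : Matrix d d 𝕜)
    (hR : Rᵀ = R) (hP : Pᵀ = P) :
    (A + Ab - B * R⁻¹ * Bᵀ * P)ᵀ = Aᵀ + Abᵀ - P * B * R⁻¹ * Bᵀ := by
  simp [transpose_add, transpose_sub, transpose_mul, transpose_nonsing_inv, hR, hP,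
    Matrix.mul_assoc]

theorem adjoint_r_equation_mftc_general (n d : ℕ)
    (A Ab S ST Qb QbT : Matrix (Fin n) (Fin n) ℝ)
    (B : Matrix (Fin n) (Fin d) ℝ) (R : Matrix (Fin d) (Fin d) ℝ)
    (T : ℝ)
    (hR : R.PosDef)
    (P Sig : ℝ → Matrix (Fin n) (Fin n) ℝ)
    (hPsymm : ∀ t, (P t)ᵀ = P t)
    (hSig : ∀ t (i j : Fin n), HasDerivAt (fun s => Sig s i j)
      ((-(Sig t * (A + Ab - B * R⁻¹ * Bᵀ * P t)
          + (A + Ab - B * R⁻¹ * Bᵀ * P t)ᵀ * Sig t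
          - Sig t * B * R⁻¹ * Bᵀ * Sig t
          + Sᵀ * Qb * S - Qb * S - Sᵀ * Qb + P t * Ab + Abᵀ * P t)) i j) t)
    (hSigT : Sig T = STᵀ * QbT * ST - (STᵀ * QbT + QbT * ST))
    (y : ℝ → Fin n → ℝ)
    (hy : ∀ t (i : Fin n), HasDerivAt (fun s => y s i)
      (((A + Ab - B * R⁻¹ * Bᵀ * P t).mulVec (y t)
        - (B * R⁻¹ * Bᵀ * Sig t).mulVec (y t)) i) t) :
    (∀ t (i : Fin n), HasDerivAt (fun s => (Sig s).mulVec (y s) i)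
      ((-((Aᵀ + Abᵀ - P t * B * R⁻¹ * Bᵀ).mulVec ((Sig t).mulVec (y t))
          + (Sᵀ * Qb * S - Qb * S - Sᵀ * Qb + P t * Ab + Abᵀ * P t).mulVec (y t))) i) t) ∧
    (Sig T).mulVec (y T)
      = (STᵀ * QbT * ST - STᵀ * QbT - QbT * ST).mulVec (y T) := by
  refine ⟨fun t i => ?_, by rw [hSigT, sub_add_eq_sub_sub]⟩
  convert hasDerivAt_mulVec_apply (hSig t) (hy t) i using 1
  rw [← transpose_closedLoop_eq A Ab (P t) B R hR.1.eq (hPsymm t),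
    ← riccati_mulVec_add_mulVec_feedback (Sig t) (A + Ab - B * R⁻¹ * Bᵀ * P t) _
      (B * R⁻¹ * Bᵀ)]
  congrm ((-?_) *ᵥ y t + _) i
  simp only [Matrix.mul_assoc]
  abel

/-- mean field type control, deterministic case: if `y` solves
`dy/dt = (A + Ā - BR⁻¹B*P)y - BR⁻¹B*Σy`, `y(0) = x̄₀`, with `P` solving the
`P`-Riccati equation and `Σ` (symmetric) solving the `Σ`-equation at `m₁ = 1`, then
`r := Σy` satisfies
`-dr/dt = (A* + Ā* - PBR⁻¹B*)r + (S*Q̄S - Q̄S - S*Q̄ + PĀ + Ā*P)y`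
with `r(T) = (S_T*Q̄_T S_T - S_T*Q̄_T - Q̄_T S_T)y(T)`. -/
theorem adjoint_r_equation_mftc (n d : ℕ)
    (A Ab S ST Q Qb QT QbT : Matrix (Fin n) (Fin n) ℝ)
    (B : Matrix (Fin n) (Fin d) ℝ) (R : Matrix (Fin d) (Fin d) ℝ)
    (T : ℝ) (x0bar : Fin n → ℝ)
    (hR : R.PosDef) (hQb : Qbᵀ = Qb) (hQbT : QbTᵀ = QbT)
    (P Sig : ℝ → Matrix (Fin n) (Fin n) ℝ)
    (hPsymm : ∀ t, (P t)ᵀ = P t)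
    (hSigSymm : ∀ t, (Sig t)ᵀ = Sig t)
    (hPRic : ∀ t (i j : Fin n), HasDerivAt (fun s => P s i j)
      ((-(P t * A + Aᵀ * P t - P t * B * R⁻¹ * Bᵀ * P t + Q + Qb)) i j) t)
    (hPT : P T = QT + QbT)
    (hSig : ∀ t (i j : Fin n), HasDerivAt (fun s => Sig s i j)
      ((-(Sig t * (A + Ab - B * R⁻¹ * Bᵀ * P t)
          + (A + Ab - B * R⁻¹ * Bᵀ * P t)ᵀ * Sig t
          - Sig t * B * R⁻¹ * Bᵀ * Sig t
          + Sᵀ * Qb * S - Qb * S - Sᵀ * Qb + P t * Ab + Abᵀ * P t)) i j) t)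
    (hSigT : Sig T = STᵀ * QbT * ST - (STᵀ * QbT + QbT * ST))
    (y : ℝ → Fin n → ℝ)
    (hy : ∀ t (i : Fin n), HasDerivAt (fun s => y s i)
      (((A + Ab - B * R⁻¹ * Bᵀ * P t).mulVec (y t)
        - (B * R⁻¹ * Bᵀ * Sig t).mulVec (y t)) i) t)
    (hy0 : y 0 = x0bar) :
    (∀ t (i : Fin n), HasDerivAt (fun s => (Sig s).mulVec (y s) i)
      ((-((Aᵀ + Abᵀ - P t * B * R⁻¹ * Bᵀ).mulVec ((Sig t).mulVec (y t))
          + (Sᵀ * Qb * S - Qb * S - Sᵀ * Qb + P t * Ab + Abᵀ * P t).mulVec (y t))) i) t) ∧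
    (Sig T).mulVec (y T)
      = (STᵀ * QbT * ST - STᵀ * QbT - QbT * ST).mulVec (y T) :=
  adjoint_r_equation_mftc_general n d A Ab S ST Qb QbT B R T hR P Sig hPsymm hSig hSigT y hy
end
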